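/- For any graph G and any non-negative integer s, the graphs (S_{2s+1}(G))^{2s+1} and G are homomorphically equivalent, i.e., each admits a homomorphism to the other. -/

import Mathlib

structure UGraph where
  V : Type
  Adj : V → V → Prop
  symm : ∀ u v, Adj u v → Adj v u

namespace UGraph

/-- There is a walk of length exactly `n` from `u` to `v`. -/
def walkLen (G : UGraph) : ℕ → G.V → G.V → Prop
  | 0, u, v => u = v
  | n+1, u, v => ∃ w, G.Adj u w ∧ G.walkLen n w v

theorem walkLen_concat (G : UGraph) : ∀ (n : ℕ) (u v w : G.V),
    G.walkLen n u v → G.Adj v w → G.walkLen (n+1) u w := by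
  intro n
  induction n with
  | zero =>
      intro u v w h hadj
      cases h
      exact ⟨w, hadj, rfl⟩
  | succ n ih =>
      rintro u v w ⟨x, hux, hxv⟩ hadj
      exact ⟨x, hux, ih x v w hxv hadj⟩

theorem walkLen_symm (G : UGraph) : ∀ (n : ℕ) (u v : G.V),
    G.walkLen n u v → G.walkLen n v u := by
  intro n
  induction n with
  | zero => intro u v h; exact h.symm
  | succ n ih =>
      rintro u v ⟨w, huw, hwv⟩
      exact G.walkLen_concat n v w u (ih w v hwv) (G.symm u w huw)

/-- The `k`-th power of a graph: same vertices, adjacency = existence of a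
walk of length exactly `k` (loops allowed). -/
def pow (G : UGraph) (k : ℕ) : UGraph where
  V := G.V
  Adj u v := G.walkLen k u v
  symm := G.walkLen_symm k

/-- Existence of a graph homomorphism. -/
def homTo (G H : UGraph) : Prop :=
  ∃ f : G.V → H.V, ∀ u v, G.Adj u v → H.Adj (f u) (f v)

/-- The `(2s+1)`-subdivision `S_{2s+1}(G)`: every edge is replaced by a path
of length `2s+1`.  Following the paper's notation, the ordered pair `(u,v)`
(with `u ~ v`) carries the `s` inner vertices `(uv)_1, …, (uv)_s`. -/
def subdiv (G : UGraph) (s : ℕ) : UGraph where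
  V := G.V ⊕ ({p : G.V × G.V // G.Adj p.1 p.2} × Fin s)
  Adj x y :=
    match x, y with
    | Sum.inl u, Sum.inl v => s = 0 ∧ G.Adj u v
    | Sum.inl u, Sum.inr (e, k) => u = e.1.2 ∧ (k : ℕ) = s - 1
    | Sum.inr (e, k), Sum.inl u => u = e.1.2 ∧ (k : ℕ) = s - 1
    | Sum.inr (e, k), Sum.inr (e', l) =>
        e'.1.1 = e.1.2 ∧ e'.1.2 = e.1.1 ∧
        ((k : ℕ) + (l : ℕ) + 2 = s ∨ (k : ℕ) + (l : ℕ) + 2 = s + 1)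
  symm := by
    rintro (u | ⟨e, k⟩) (v | ⟨e', l⟩) h
    · exact ⟨h.1, G.symm _ _ h.2⟩
    · exact h
    · exact h
    · obtain ⟨h1, h2, h3⟩ := h
      exact ⟨h2.symm, h1.symm, by omega⟩

/-- `q < og(G)`: the rational `q` is smaller than the odd girth of `G`
(the length of a shortest odd closed walk; vacuously true if `G` is bipartite). -/
def ltOddGirth (G : UGraph) (q : ℚ) : Prop :=
  ∀ n : ℕ, Odd n → (∃ v, G.walkLen n v v) → q < (n : ℚ)

/-- A graph is non-bipartite iff it contains an odd closed walk. -/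
def Nonbipartite (G : UGraph) : Prop :=
  ∃ (n : ℕ) (v : G.V), Odd n ∧ G.walkLen n v v

/-- The odd girth, as an extended natural number (`⊤` for bipartite graphs). -/
noncomputable def oddGirth (G : UGraph) : ℕ∞ :=
  sInf {N : ℕ∞ | ∃ n : ℕ, N = (n : ℕ∞) ∧ Odd n ∧ ∃ v, G.walkLen n v v}

/-- The complete graph on `m` vertices. -/
def completeGraph (m : ℕ) : UGraph :=
  ⟨Fin m, fun u v => u ≠ v, fun _ _ h => h.symm⟩

/-- The chromatic number: least `m` such that `G` maps homomorphically to `K_m`. -/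
noncomputable def chromatic (G : UGraph) : ℕ :=
  sInf {m : ℕ | G.homTo (completeGraph m)}

/-- The `i`-th power thickness
`θ_i(G) = sup { (2r+1)/(2s+1) | χ(G^{(2r+1)/(2s+1)}) ≤ χ(G)+i, (2r+1)/(2s+1) < og(G) }`. -/
noncomputable def powerThickness (G : UGraph) (i : ℤ) : ℝ :=
  sSup {x : ℝ | ∃ r s : ℕ, x = (2*(r:ℝ)+1)/(2*(s:ℝ)+1) ∧
    ((((G.subdiv s).pow (2*r+1)).chromatic : ℤ) ≤ (G.chromatic : ℤ) + i) ∧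
    G.ltOddGirth ((2*(r:ℚ)+1)/(2*(s:ℚ)+1))}

/-- The graph `H^{-1/(2r+1)}`. -/
def negPow (H : UGraph) (r : ℕ) : UGraph where
  V := {A : Fin (r+1) → Set H.V //
        (∃ v, A 0 = {v}) ∧
        ∀ i : Fin (r+1), (A i).Nonempty ∧ A i ⊆ {u | ∃ v ∈ A 0, H.walkLen i v u}}
  Adj A B :=
    (∀ i j : Fin (r+1), (j : ℕ) = (i : ℕ) + 1 → A.1 i ⊆ B.1 j ∧ B.1 i ⊆ A.1 j) ∧
    ∀ j : Fin (r+1), ∀ a ∈ A.1 j, ∀ b ∈ B.1 j, H.Adj a b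
  symm := by
    rintro A B ⟨h1, h2⟩
    exact ⟨fun i j hij => ⟨(h1 i j hij).2, (h1 i j hij).1⟩,
           fun j b hb a ha => H.symm _ _ (h2 j a ha b hb)⟩

/-- The circular complete graph `K_{n/d}`. -/
def circGraph (n d : ℕ) : UGraph where
  V := Fin n
  Adj u v := (d : ℤ) ≤ |(u : ℤ) - (v : ℤ)| ∧ |(u : ℤ) - (v : ℤ)| ≤ (n : ℤ) - d
  symm := by
    intro u v h
    rwa [abs_sub_comm]

/-- The circular chromatic number, as a real number. -/
noncomputable def circChrom (G : UGraph) : ℝ :=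
  sInf {x : ℝ | ∃ n d : ℕ, 0 < d ∧ 2 * d ≤ n ∧ Nat.gcd n d = 1 ∧
    x = (n : ℝ) / (d : ℝ) ∧ G.homTo (circGraph n d)}

/-- The cycle on `m` vertices. -/
def cycleGraph (m : ℕ) : UGraph :=
  ⟨ZMod m, fun i j => i = j + 1 ∨ j = i + 1, fun _ _ h => h.symm⟩

/-- UGraph isomorphism. -/
def Isom (G H : UGraph) : Prop :=
  ∃ f : G.V ≃ H.V, ∀ u v, G.Adj u v ↔ H.Adj (f u) (f v)

/-- The helical graph `H(m,n,k)`. -/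
def helical (m n k : ℕ) : UGraph where
  V := {A : Fin k → Set (Fin m) //
        (∀ h : 0 < k, (A ⟨0, h⟩).ncard = n) ∧
        (∀ i, n ≤ (A i).ncard) ∧
        (∀ i : Fin k, ∀ h : (i : ℕ) + 1 < k, A i ∩ A ⟨(i : ℕ) + 1, h⟩ = ∅) ∧
        (∀ i : Fin k, ∀ h : (i : ℕ) + 2 < k, A i ⊆ A ⟨(i : ℕ) + 2, h⟩)}
  Adj A B :=
    (∀ i, A.1 i ∩ B.1 i = ∅) ∧
    (∀ i : Fin k, ∀ h : (i : ℕ) + 1 < k,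
      A.1 i ⊆ B.1 ⟨(i : ℕ) + 1, h⟩ ∧ B.1 i ⊆ A.1 ⟨(i : ℕ) + 1, h⟩)
  symm := by
    rintro A B ⟨h1, h2⟩
    refine ⟨fun i => ?_, fun i h => ⟨(h2 i h).2, (h2 i h).1⟩⟩
    rw [Set.inter_comm]
    exact h1 i

/-- A graph with chromatic number `k` is colorful if every proper `k`-coloring
admits a (nonempty) induced subgraph all of whose vertices see all `k` colors in
their closed neighborhood. -/
def Colorful (G : UGraph) : Prop :=
  ∀ c : G.V → Fin G.chromatic, (∀ u v, G.Adj u v → c u ≠ c v) →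
    ∃ S : Set G.V, S.Nonempty ∧
      ∀ v ∈ S, ∀ col : Fin G.chromatic,
        ∃ u ∈ S, (u = v ∨ G.Adj v u) ∧ c u = col

end UGraph

/-! Send each vertex of `S_{2s+1}(G)` to the end of its subdivided edge at even distance from
it. A walk of length `n` in the subdivision either stays on one subdivided edge, or leaves its
start through a branch vertex `a`, follows a walk of length `L` in `G`, each edge of which costs
`2s + 1` steps, and enters its end through a branch vertex `b`; `n` is at least the total cost
and has the same parity. For `n = 2s + 1` either `L = 1` and both ends are branch vertices, or
`L = 0` and parity puts the images of the two ends at the two ends of one edge of `G`.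
Conversely `G` embeds in the power: each edge becomes a path of length `2s + 1`. -/

namespace UGraph

variable {G : UGraph} {s : ℕ}

/-- On the subdivided edge from `u` to `v` the inner vertices alternate between the two
orientations: `(e, k)` with `e = (u, v)` lies `2k + 2` steps from `u`, and with `e = (v, u)`
it lies `2k + 2` steps from `v`, i.e. `2s - 1 - 2k` steps from `u`. -/
def SubdivPos (G : UGraph) (s : ℕ) (z : (G.subdiv s).V) (u v : G.V) (p : ℕ) : Prop :=
  G.Adj u v ∧
    ((z = .inl u ∧ p = 0) ∨ (z = .inl v ∧ p = 2 * s + 1) ∨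
      ∃ e k, z = .inr (e, k) ∧
        ((e.1 = (u, v) ∧ p = 2 * k + 2) ∨ (e.1 = (v, u) ∧ p + 2 * k + 1 = 2 * s)))

/-- Sends every vertex of the subdivided edge `uv` to the endpoint at even distance. -/
def subdivProj (G : UGraph) (s : ℕ) : (G.subdiv s).V → G.V
  | .inl u => u
  | .inr (e, _) => e.1.1

namespace SubdivPos

variable {x z : (G.subdiv s).V} {u v : G.V} {p : ℕ}

theorem le (h : SubdivPos G s z u v p) : p ≤ 2 * s + 1 := by
  obtain ⟨-, ⟨-, rfl⟩ | ⟨-, rfl⟩ | ⟨e, k, -, ⟨-, rfl⟩ | ⟨-, hp⟩⟩⟩ := h <;> omega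

theorem symm (h : SubdivPos G s z u v p) : SubdivPos G s z v u (2 * s + 1 - p) := by
  obtain ⟨huv, ⟨rfl, rfl⟩ | ⟨rfl, rfl⟩ | ⟨e, k, rfl, ⟨he, rfl⟩ | ⟨he, hp⟩⟩⟩ := h
  · exact ⟨G.symm _ _ huv, .inr (.inl ⟨rfl, rfl⟩)⟩
  · exact ⟨G.symm _ _ huv, .inl ⟨rfl, by omega⟩⟩
  · exact ⟨G.symm _ _ huv, .inr (.inr ⟨e, k, rfl, .inr ⟨he, by omega⟩⟩)⟩
  · exact ⟨G.symm _ _ huv, .inr (.inr ⟨e, k, rfl, .inl ⟨he, by omega⟩⟩)⟩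

theorem eq_inl_of_eq_zero (h : SubdivPos G s z u v 0) : z = .inl u := by
  obtain ⟨-, ⟨rfl, -⟩ | ⟨-, h⟩ | ⟨e, k, -, ⟨-, h⟩ | ⟨-, h⟩⟩⟩ := h
  · rfl
  · omega
  · omega
  · have := k.isLt; omega

theorem eq_inl_of_eq_top (h : SubdivPos G s z u v (2 * s + 1)) : z = .inl v := by
  have h0 := h.symm
  rw [Nat.sub_self] at h0
  exact h0.eq_inl_of_eq_zero

theorem subdivProj_eq (h : SubdivPos G s z u v p) :
    (p % 2 = 0 → subdivProj G s z = u) ∧ (p % 2 = 1 → subdivProj G s z = v) := by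
  obtain ⟨-, ⟨rfl, rfl⟩ | ⟨rfl, rfl⟩ | ⟨e, k, rfl, ⟨he, rfl⟩ | ⟨he, hp⟩⟩⟩ := h
  · exact ⟨fun _ => rfl, by omega⟩
  · exact ⟨by omega, fun _ => rfl⟩
  · exact ⟨fun _ => by simp [subdivProj, he], by omega⟩
  · exact ⟨by omega, fun _ => by simp [subdivProj, he]⟩

theorem of_adj (hxz : (G.subdiv s).Adj x z) (h : SubdivPos G s z u v p) (hp : 1 ≤ p)
    (hp' : p ≤ 2 * s) : SubdivPos G s x u v (p + 1) ∨ SubdivPos G s x u v (p - 1) := by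
  obtain ⟨huv, ⟨-, rfl⟩ | ⟨-, rfl⟩ | ⟨e, k, rfl, hek⟩⟩ := h
  · omega
  · omega
  have hk := k.isLt
  rcases x with w | ⟨e', k'⟩
  · obtain ⟨rfl, hks⟩ := hxz
    rcases hek with ⟨he, rfl⟩ | ⟨he, hp⟩
    · exact .inl ⟨huv, .inr (.inl ⟨by rw [he], by omega⟩)⟩
    · exact .inr ⟨huv, .inl ⟨by rw [he], by omega⟩⟩
  · obtain ⟨h1, h2, hkk⟩ := hxz
    have := k'.isLt
    rcases hek with ⟨he, rfl⟩ | ⟨he, hp⟩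
    · have he' : e'.1 = (v, u) := Prod.ext (by rw [← h2, he]) (by rw [← h1, he])
      rcases hkk with hkk | hkk
      · exact .inl ⟨huv, .inr (.inr ⟨e', k', rfl, .inr ⟨he', by omega⟩⟩)⟩
      · exact .inr ⟨huv, .inr (.inr ⟨e', k', rfl, .inr ⟨he', by omega⟩⟩)⟩
    · have he' : e'.1 = (u, v) := Prod.ext (by rw [← h2, he]) (by rw [← h1, he])
      rcases hkk with hkk | hkk
      · exact .inr ⟨huv, .inr (.inr ⟨e', k', rfl, .inl ⟨he', by omega⟩⟩)⟩
      · exact .inl ⟨huv, .inr (.inr ⟨e', k', rfl, .inl ⟨he', by omega⟩⟩)⟩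

theorem exists_adj_succ (h : SubdivPos G s z u v p) (hp : p ≤ 2 * s) :
    ∃ z', (G.subdiv s).Adj z z' ∧ SubdivPos G s z' u v (p + 1) := by
  obtain ⟨huv, ⟨rfl, rfl⟩ | ⟨-, rfl⟩ | ⟨e, k, rfl, ⟨he, rfl⟩ | ⟨he, hp⟩⟩⟩ := h
  · rcases Nat.eq_zero_or_pos s with rfl | hs
    · exact ⟨.inl v, ⟨rfl, huv⟩, huv, .inr (.inl ⟨rfl, rfl⟩)⟩
    · exact ⟨.inr (⟨(v, u), G.symm _ _ huv⟩, ⟨s - 1, by omega⟩), ⟨rfl, rfl⟩,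
        huv, .inr (.inr ⟨_, _, rfl, .inr ⟨rfl, by simp; omega⟩⟩)⟩
  · omega
  · by_cases hk : (k : ℕ) + 1 = s
    · exact ⟨.inl v, ⟨by simp [he], by omega⟩, huv, .inr (.inl ⟨rfl, by omega⟩)⟩
    · exact ⟨.inr (⟨(v, u), G.symm _ _ huv⟩, ⟨s - 2 - k, by omega⟩),
        ⟨by simp [he], by simp [he], .inl (by simp; omega)⟩,
        huv, .inr (.inr ⟨_, _, rfl, .inr ⟨rfl, by simp; omega⟩⟩)⟩
  · have hk := k.isLt
    exact ⟨.inr (⟨(u, v), huv⟩, ⟨s - 1 - k, by omega⟩),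
      ⟨by simp [he], by simp [he], .inr (by simp; omega)⟩,
      huv, .inr (.inr ⟨_, _, rfl, .inl ⟨rfl, by simp; omega⟩⟩)⟩

theorem walkLen_inl (h : SubdivPos G s z u v p) :
    (G.subdiv s).walkLen (2 * s + 1 - p) z (.inl v) := by
  induction hd : 2 * s + 1 - p generalizing z p with
  | zero =>
    obtain rfl : p = 2 * s + 1 := by have := h.le; omega
    exact h.eq_inl_of_eq_top
  | succ d ih =>
    obtain ⟨z', hzz', h'⟩ := h.exists_adj_succ (by omega)
    exact ⟨z', hzz', ih h' (by omega)⟩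

end SubdivPos

theorem exists_subdivPos_one_of_adj_inl {x : (G.subdiv s).V} {a : G.V}
    (h : (G.subdiv s).Adj x (.inl a)) : ∃ v, SubdivPos G s x a v 1 := by
  rcases x with w | ⟨e, k⟩
  · obtain ⟨rfl, hwa⟩ := h
    exact ⟨w, G.symm _ _ hwa, .inr (.inl ⟨rfl, rfl⟩)⟩
  · obtain ⟨rfl, hk⟩ := h
    have := k.isLt
    exact ⟨e.1.1, G.symm _ _ e.2, .inr (.inr ⟨e, k, rfl, .inr ⟨rfl, by omega⟩⟩)⟩

def SubdivAnchor (G : UGraph) (s : ℕ) (z : (G.subdiv s).V) (a : G.V) (j : ℕ) : Prop :=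
  (z = .inl a ∧ j = 0) ∨ ∃ v, SubdivPos G s z a v j

namespace SubdivAnchor

variable {x z : (G.subdiv s).V} {a : G.V} {j : ℕ}

theorem le (h : SubdivAnchor G s z a j) : j ≤ 2 * s + 1 := by
  obtain ⟨-, rfl⟩ | ⟨v, h⟩ := h
  · omega
  · exact h.le

theorem subdivProj_eq (h : SubdivAnchor G s z a j) :
    (j % 2 = 0 → subdivProj G s z = a) ∧ (j % 2 = 1 → G.Adj (subdivProj G s z) a) := by
  obtain ⟨rfl, rfl⟩ | ⟨v, h⟩ := h
  · exact ⟨fun _ => rfl, by omega⟩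
  · exact ⟨h.subdivProj_eq.1, fun hj => h.subdivProj_eq.2 hj ▸ G.symm _ _ h.1⟩

theorem exists_eq_inl_of_eq_top (h : SubdivAnchor G s z a (2 * s + 1)) :
    ∃ v, z = .inl v ∧ G.Adj v a := by
  obtain ⟨-, h⟩ | ⟨v, h⟩ := h
  · omega
  · exact ⟨v, h.eq_inl_of_eq_top, G.symm _ _ h.1⟩

theorem of_adj (hxz : (G.subdiv s).Adj x z) (h : SubdivAnchor G s z a j) (hj : j ≤ 2 * s) :
    SubdivAnchor G s x a (j + 1) ∨ (1 ≤ j ∧ SubdivAnchor G s x a (j - 1)) := by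
  obtain ⟨rfl, rfl⟩ | ⟨v, h⟩ := h
  · exact .inl (.inr (exists_subdivPos_one_of_adj_inl hxz))
  · rcases Nat.eq_zero_or_pos j with rfl | hj0
    · exact .inl (.inr (exists_subdivPos_one_of_adj_inl (h.eq_inl_of_eq_zero ▸ hxz)))
    · rcases h.of_adj hxz hj0 hj with hx | hx
      · exact .inl (.inr ⟨v, hx⟩)
      · exact .inr ⟨hj0, .inr ⟨v, hx⟩⟩

end SubdivAnchor

variable {n : ℕ} {x y z : (G.subdiv s).V}

/-- Shape of a walk of length `n` that passes through branch vertices: it leaves `x` through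
`a`, follows a walk of length `L` of `G` (each edge costing `2s + 1` steps) and enters `y`
through `b`; the remaining steps cancel in pairs. -/
def SubdivViaBranch (G : UGraph) (s n : ℕ) (x y : (G.subdiv s).V) : Prop :=
  ∃ a b j l L, SubdivAnchor G s x a j ∧ SubdivAnchor G s y b l ∧ G.walkLen L a b ∧
    j + l + (2 * s + 1) * L ≤ n ∧ (n + j + l + L) % 2 = 0

def SubdivOnEdge (G : UGraph) (s n : ℕ) (x y : (G.subdiv s).V) : Prop :=
  ∃ u v p q, SubdivPos G s x u v p ∧ SubdivPos G s y u v q ∧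
    p ≤ q + n ∧ q ≤ p + n ∧ (n + p + q) % 2 = 0

theorem SubdivViaBranch.cons (hxz : (G.subdiv s).Adj x z) (h : SubdivViaBranch G s n z y) :
    SubdivViaBranch G s (n + 1) x y := by
  obtain ⟨a, b, j, l, L, ha, hb, hL, hn, hpar⟩ := h
  rcases ha.le.lt_or_eq with hj | rfl
  · rcases ha.of_adj hxz (by omega) with hx | ⟨hj0, hx⟩
    · exact ⟨a, b, j + 1, l, L, hx, hb, hL, by omega, by omega⟩
    · exact ⟨a, b, j - 1, l, L, hx, hb, hL, by omega, by omega⟩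
  · -- `z` is then a branch vertex next to `a`; re-anchor at `z` itself
    obtain ⟨v, rfl, hva⟩ := ha.exists_eq_inl_of_eq_top
    have hx : SubdivAnchor G s x v 1 := .inr (exists_subdivPos_one_of_adj_inl hxz)
    refine ⟨v, b, 1, l, L + 1, hx, hb, ⟨a, hva, hL⟩, ?_, by omega⟩
    rw [Nat.mul_succ]
    omega

theorem SubdivOnEdge.cons (hxz : (G.subdiv s).Adj x z) (h : SubdivOnEdge G s n z y) :
    SubdivViaBranch G s (n + 1) x y ∨ SubdivOnEdge G s (n + 1) x y := by
  obtain ⟨u, v, p, q, hz, hy, hpq, hqp, hpar⟩ := h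
  by_cases hp : 1 ≤ p ∧ p ≤ 2 * s
  · rcases hz.of_adj hxz hp.1 hp.2 with hx | hx
    · exact .inr ⟨u, v, p + 1, q, hx, hy, by omega, by omega, by omega⟩
    · exact .inr ⟨u, v, p - 1, q, hx, hy, by omega, by omega, by omega⟩
  refine .inl (SubdivViaBranch.cons hxz ?_)
  rcases Nat.eq_zero_or_pos p with rfl | hp0
  · exact ⟨u, u, 0, q, 0, .inl ⟨hz.eq_inl_of_eq_zero, rfl⟩, .inr ⟨v, hy⟩, rfl,
      by omega, by omega⟩
  · obtain rfl : p = 2 * s + 1 := by have := hz.le; omega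
    exact ⟨v, v, 0, 2 * s + 1 - q, 0, .inl ⟨hz.eq_inl_of_eq_top, rfl⟩, .inr ⟨u, hy.symm⟩,
      rfl, by omega, by have := hy.le; omega⟩

theorem subdivViaBranch_or_subdivOnEdge_of_walkLen (h : (G.subdiv s).walkLen n x y) :
    SubdivViaBranch G s n x y ∨ SubdivOnEdge G s n x y := by
  induction n generalizing x with
  | zero =>
    obtain rfl : x = y := h
    rcases x with u | ⟨e, k⟩
    · exact .inl ⟨u, u, 0, 0, 0, .inl ⟨rfl, rfl⟩, .inl ⟨rfl, rfl⟩, rfl, by omega, by omega⟩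
    · have hx : SubdivPos G s (.inr (e, k)) e.1.1 e.1.2 (2 * k + 2) :=
        ⟨e.2, .inr (.inr ⟨e, k, rfl, .inl ⟨rfl, rfl⟩⟩)⟩
      exact .inr ⟨_, _, _, _, hx, hx, by omega, by omega, by omega⟩
  | succ n ih =>
    obtain ⟨z, hxz, hz⟩ := h
    rcases ih hz with hz | hz
    · exact .inl (hz.cons hxz)
    · exact hz.cons hxz

theorem SubdivViaBranch.adj_subdivProj (h : SubdivViaBranch G s (2 * s + 1) x y) :
    G.Adj (subdivProj G s x) (subdivProj G s y) := by
  obtain ⟨a, b, j, l, L, ha, hb, hL, hn, hpar⟩ := h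
  obtain ⟨hxa, hxa'⟩ := ha.subdivProj_eq
  obtain ⟨hyb, hyb'⟩ := hb.subdivProj_eq
  rcases L with _ | _ | L
  · obtain rfl : a = b := hL
    rcases Nat.mod_two_eq_zero_or_one j with hj | hj
    · exact hxa hj ▸ G.symm _ _ (hyb' (by omega))
    · exact hyb (by omega) ▸ hxa' hj
  · obtain ⟨w, haw, rfl⟩ := hL
    rw [hxa (by omega), hyb (by omega)]
    exact haw
  · rw [Nat.mul_succ, Nat.mul_succ] at hn
    omega

theorem SubdivOnEdge.adj_subdivProj (h : SubdivOnEdge G s (2 * s + 1) x y) :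
    G.Adj (subdivProj G s x) (subdivProj G s y) := by
  obtain ⟨u, v, p, q, hx, hy, -, -, hpar⟩ := h
  rcases Nat.mod_two_eq_zero_or_one p with hp | hp
  · rw [hx.subdivProj_eq.1 hp, hy.subdivProj_eq.2 (by omega)]
    exact hx.1
  · rw [hx.subdivProj_eq.2 hp, hy.subdivProj_eq.1 (by omega)]
    exact G.symm _ _ hx.1

theorem subdiv_pow_homTo (G : UGraph) (s : ℕ) : ((G.subdiv s).pow (2 * s + 1)).homTo G :=
  ⟨subdivProj G s, fun _ _ h =>
    (subdivViaBranch_or_subdivOnEdge_of_walkLen h).elim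
      SubdivViaBranch.adj_subdivProj SubdivOnEdge.adj_subdivProj⟩

theorem homTo_subdiv_pow (G : UGraph) (s : ℕ) : G.homTo ((G.subdiv s).pow (2 * s + 1)) :=
  ⟨.inl, fun u v h => (show SubdivPos G s (.inl u) u v 0 from ⟨h, .inl ⟨rfl, rfl⟩⟩).walkLen_inl⟩

end UGraph

open UGraph
theorem subdiv_pow_hom_equiv (G : UGraph) (s : ℕ) :
    ((G.subdiv s).pow (2 * s + 1)).homTo G ∧ G.homTo ((G.subdiv s).pow (2 * s + 1)) :=
  ⟨subdiv_pow_homTo G s, homTo_subdiv_pow G s⟩
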